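/- Let L : ℕ → ℝ be a sequence of packet lengths with L(j) > 0 for all j and Σ_j L(j) = ∞, let 𝒫 : ℝ≥0 → ℕ be the induced packet operator 𝒫(x) = max{n : Σ_{j=1}^n L(j) ≤ x}, and let 𝒫⁻(n) = Σ_{j=1}^n L(j) be its data operator. If π : ℝ≥0 → ℝ is a minimum packet curve for 𝒫 with π(d) → ∞ as d → ∞, then for all naturals p ≤ q: 𝒫⁻(q) − 𝒫⁻(p) ≤ sup{d ≥ 0 : π(d) ≤ q − p}. -/

import Mathlib

/-! Since the lengths are positive, `𝒫(𝒫⁻(n)) = n`, so the minimum packet curve inequality at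
`x = 𝒫⁻(p)`, `y = 𝒫⁻(q)` says exactly that `𝒫⁻(q) - 𝒫⁻(p)` lies in `{d ≥ 0 : π d ≤ q - p}`;
as `π → ∞` this set is bounded above, so its supremum dominates the member. -/

open Filter

/-- Cumulative length of the first `n` packets: `𝒫⁻(n) = Σ_{j=1}^n L j`. -/
noncomputable def cumLen (L : ℕ → ℝ) (n : ℕ) : ℝ := ∑ j ∈ Finset.range n, L j

/-- The packet operator `𝒫(x) = max {n : Σ_{j=1}^n L j ≤ x}`. -/
noncomputable def packOp (L : ℕ → ℝ) (x : ℝ) : ℕ := sSup {n : ℕ | cumLen L n ≤ x}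

theorem bddAbove_setOf_le_of_tendsto_atTop {α β : Type*} [LinearOrder α] [Nonempty α]
    [LinearOrder β] [NoMaxOrder β] {f : α → β} (hf : Tendsto f atTop atTop) (c : β) :
    BddAbove {x | f x ≤ c} := by
  obtain ⟨M, hM⟩ := (hf.eventually_gt_atTop c).exists_forall_of_atTop
  exact ⟨M, fun x hx => le_of_not_ge fun hMx => (hM x hMx).not_ge hx⟩

section PacketLengths

variable {L : ℕ → ℝ}

theorem cumLen_nonneg (hL : ∀ j, 0 ≤ L j) (n : ℕ) : 0 ≤ cumLen L n :=
  Finset.sum_nonneg fun j _ => hL j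

theorem cumLen_strictMono (hL : ∀ j, 0 < L j) : StrictMono (cumLen L) :=
  strictMono_nat_of_lt_succ fun n => by
    simpa [cumLen, Finset.sum_range_succ] using hL n

theorem packOp_cumLen (hL : ∀ j, 0 < L j) (n : ℕ) : packOp L (cumLen L n) = n := by
  have hset : {m : ℕ | cumLen L m ≤ cumLen L n} = Set.Iic n := by
    ext m
    simp [(cumLen_strictMono hL).le_iff_le]
  rw [packOp, hset, csSup_Iic]

end PacketLengths

theorem stmt_4_general (L : ℕ → ℝ) (hL : ∀ j, 0 < L j)
    (pimin : ℝ → ℝ)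
    (hpimin : ∀ x y : ℝ, 0 ≤ x → x ≤ y →
      pimin (y - x) ≤ ((packOp L y : ℝ) - (packOp L x : ℝ)))
    (hpitend : Tendsto pimin atTop atTop) :
    ∀ p q : ℕ, p ≤ q →
      cumLen L q - cumLen L p ≤ sSup {d : ℝ | 0 ≤ d ∧ pimin d ≤ ((q : ℝ) - (p : ℝ))} := by
  intro p q hpq
  have hle : cumLen L p ≤ cumLen L q := (cumLen_strictMono hL).monotone hpq
  have hmem : cumLen L q - cumLen L p ∈ {d : ℝ | 0 ≤ d ∧ pimin d ≤ ((q : ℝ) - (p : ℝ))} := by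
    refine ⟨sub_nonneg.mpr hle, ?_⟩
    simpa only [packOp_cumLen hL] using
      hpimin _ _ (cumLen_nonneg (fun j => (hL j).le) p) hle
  have hbdd : BddAbove {d : ℝ | 0 ≤ d ∧ pimin d ≤ ((q : ℝ) - (p : ℝ))} :=
    (bddAbove_setOf_le_of_tendsto_atTop hpitend _).mono fun _ hd => hd.2
  exact le_csSup hbdd hmem

/-- if `π` is a minimum packet curve, tending to infinity, for the packet
operator induced by positive packet lengths with divergent sum, then for naturals
`p ≤ q`, `𝒫⁻(q) - 𝒫⁻(p) ≤ sup {d ≥ 0 : π d ≤ q - p}`. -/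
theorem stmt_4 (L : ℕ → ℝ) (hL : ∀ j, 0 < L j)
    (hdiv : Tendsto (cumLen L) atTop atTop)
    (pimin : ℝ → ℝ)
    (hpimin : ∀ x y : ℝ, 0 ≤ x → x ≤ y →
      pimin (y - x) ≤ ((packOp L y : ℝ) - (packOp L x : ℝ)))
    (hpitend : Tendsto pimin atTop atTop) :
    ∀ p q : ℕ, p ≤ q →
      cumLen L q - cumLen L p ≤ sSup {d : ℝ | 0 ≤ d ∧ pimin d ≤ ((q : ℝ) - (p : ℝ))} :=
  stmt_4_general L hL pimin hpimin hpitend
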